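/- Suppose part (i) of Assumption 1 holds, v is Hölder continuous on 𝕋³ with exponent θ ∈ (1/2,1), and min_{p∈𝕋³} Δ(p,m) ≥ 0. Then for every p ∈ 𝕋³ the operator h(p) has no eigenvalue in (−∞, m); in fact Δ(p,z) > 0 for all p ∈ 𝕋³ and all z < m. -/

import Mathlib

noncomputable section

open MeasureTheory Real Set Filter Topology NNReal ENNReal

/-- We model the 3-torus `𝕋³ = (ℝ/2πℤ)³` by `ℝ³` together with periodicity
hypotheses; the fundamental domain is the cube `(-π, π]³`. -/
abbrev T3 : Type := EuclideanSpace ℝ (Fin 3)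

/-- The fundamental domain `(-π,π]³` of the torus. -/
def cube : Set T3 := {p | ∀ i, p i ∈ Set.Ioc (-Real.pi) Real.pi}

/-- Lebesgue measure on the fundamental domain (= Haar measure of the torus). -/
def μc : Measure T3 := volume.restrict cube

def cube2 : Set (T3 × T3) := cube ×ˢ cube

def μc2 : Measure (T3 × T3) := volume.restrict cube2

/-- A point of the lattice `(2πℤ)³`. -/
def latticeShift (s : Fin 3 → ℤ) : T3 := WithLp.toLp 2 (fun i => 2 * Real.pi * (s i))

/-- A function on `ℝ³` which is `(2πℤ)³`-periodic, i.e. a function on the torus. -/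
def Periodic3 (f : T3 → ℝ) : Prop := ∀ (p : T3) (s : Fin 3 → ℤ), f (p + latticeShift s) = f p

/-- Hölder continuity with exponent `θ` (the class `ℬ(θ)` of the paper). -/
def HolderB {X Y : Type*} [PseudoEMetricSpace X] [PseudoEMetricSpace Y] (θ : ℝ≥0) (f : X → Y) :
    Prop := ∃ C : ℝ≥0, HolderWith C θ f

/-- `i`-th standard basis vector. -/
def eb (i : Fin 3) : T3 := EuclideanSpace.single i 1

/-- Basic standing hypotheses on the data `u, v, w` of the model operator. -/
structure BasicSetup (u v : T3 → ℝ) (w : T3 → T3 → ℝ) : Prop where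
  u_meas : Measurable u
  u_bdd : ∃ C : ℝ, ∀ p, |u p| ≤ C
  u_per : Periodic3 u
  v_mem : MemLp v 2 μc
  v_per : Periodic3 v
  w_cont : Continuous (Function.uncurry w)
  w_bdd : ∃ C : ℝ, ∀ p q, |w p q| ≤ C
  w_symm : ∀ p q, w p q = w q p
  w_per : ∀ (s t : Fin 3 → ℤ) (p q : T3), w (p + latticeShift s) (q + latticeShift t) = w p q

/-- Part (i) of Assumption 1: `w` is symmetric, even, has a unique non-degenerate
minimum at `(0,0)` and all its third order partial derivatives are Hölder continuous
with exponent `θ ∈ (1/2,1)`. -/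
structure Assumption1i (w : T3 → T3 → ℝ) (θ : ℝ≥0) : Prop where
  theta_lb : (1:ℝ)/2 < (θ : ℝ)
  theta_ub : (θ : ℝ) < 1
  w_even : ∀ p q, w (-p) (-q) = w p q
  contDiff : ContDiff ℝ 3 (Function.uncurry w)
  min_le : ∀ p q, w 0 0 ≤ w p q
  uniqueMin : ∀ p ∈ cube, ∀ q ∈ cube, w p q = w 0 0 → p = 0 ∧ q = 0
  nondeg : ∀ x : T3 × T3, x ≠ 0 →
    0 < iteratedFDeriv ℝ 2 (Function.uncurry w) ((0 : T3), (0 : T3)) (fun _ => x)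
  holder3 : HolderB θ (iteratedFDeriv ℝ 3 (Function.uncurry w))

/-- Part (ii) of Assumption 1: the Hessian blocks of `w` at `(0,0)` are `l₁ W` and
`l₂ W` with `W` positive definite, `l₁ > 0`, `l₂ ≠ 0`. -/
structure Assumption1ii (w : T3 → T3 → ℝ) (W : Matrix (Fin 3) (Fin 3) ℝ) (l1 l2 : ℝ) : Prop where
  posdef : W.PosDef
  l1_pos : 0 < l1
  l2_ne : l2 ≠ 0
  hess_pp : ∀ i j, iteratedFDeriv ℝ 2 (Function.uncurry w) ((0 : T3), (0 : T3))
    ![(eb i, (0 : T3)), (eb j, (0 : T3))] = l1 * W i j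
  hess_pq : ∀ i j, iteratedFDeriv ℝ 2 (Function.uncurry w) ((0 : T3), (0 : T3))
    ![(eb i, (0 : T3)), ((0 : T3), eb j)] = l2 * W i j

/-- Assumption 2: `u ∈ C²` is even with a unique non-degenerate minimum at `0`;
`v` is even and Hölder continuous with exponent `θ ∈ (1/2,1)`. -/
structure Assumption2 (u v : T3 → ℝ) (θ : ℝ≥0) : Prop where
  theta_lb : (1:ℝ)/2 < (θ : ℝ)
  theta_ub : (θ : ℝ) < 1
  u_contDiff : ContDiff ℝ 2 u
  u_even : ∀ p, u (-p) = u p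
  u_min : ∀ p, u 0 ≤ u p
  u_uniqueMin : ∀ p ∈ cube, u p = u 0 → p = 0
  u_nondeg : ∀ x : T3, x ≠ 0 → 0 < iteratedFDeriv ℝ 2 u 0 (fun _ => x)
  v_even : ∀ p, v (-p) = v p
  v_holder : HolderB θ v

/-- `m = min w` (under Assumption 1 the minimum value is `w(0,0)`). -/
def mMin (w : T3 → T3 → ℝ) : ℝ := w 0 0

/-- `M = max w`. -/
def MMax (w : T3 → T3 → ℝ) : ℝ := sSup (Set.range (Function.uncurry w))

/-- `m(p) = min_q w(p,q)`. -/
def mLow (w : T3 → T3 → ℝ) (p : T3) : ℝ := sInf (Set.range (w p))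

/-- `M(p) = max_q w(p,q)`. -/
def MUp (w : T3 → T3 → ℝ) (p : T3) : ℝ := sSup (Set.range (w p))

/-- `Λ(p,z) = ∫_{𝕋³} v(t)²/(w(p,t)−z) dt`. -/
def Lam (v : T3 → ℝ) (w : T3 → T3 → ℝ) (p : T3) (z : ℝ) : ℝ :=
  ∫ t in cube, (v t) ^ 2 / (w p t - z)

/-- The Fredholm determinant `Δ(p,z) = u(p) − z − (1/2)∫ v(q)²/(w(p,q)−z) dq`. -/
def Del (u v : T3 → ℝ) (w : T3 → T3 → ℝ) (p : T3) (z : ℝ) : ℝ :=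
  u p - z - (1/2) * Lam v w p z

/-- Part (i) of Assumption 3: `Λ(·,m)` has a unique maximum at `p = 0`. -/
def Assumption3i (v : T3 → ℝ) (w : T3 → T3 → ℝ) : Prop :=
  ∀ p ∈ cube, p ≠ 0 → Lam v w p (mMin w) < Lam v w 0 (mMin w)

/-- Assumption 3: `Λ(·,m)` has a unique maximum at `p = 0`, and
`Λ(0,m) − Λ(p,m) > c|p|²` near `0`. -/
structure Assumption3 (v : T3 → ℝ) (w : T3 → T3 → ℝ) : Prop where
  uniqueMax : Assumption3i v w
  quad : ∃ δ > (0:ℝ), ∃ c > (0:ℝ), ∀ p : T3, p ≠ 0 → ‖p‖ < δ →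
    c * ‖p‖ ^ 2 < Lam v w 0 (mMin w) - Lam v w p (mMin w)

/-- `z` is an eigenvalue of the generalized Friedrichs model `h(p)` acting on
`ℂ ⊕ L²(𝕋³)` (real form): there is a nonzero `(f₀, f₁)` with `f₁ ∈ L²` solving the
eigenvalue equations. -/
def IsEigh (u v : T3 → ℝ) (w : T3 → T3 → ℝ) (p : T3) (z : ℝ) : Prop :=
  ∃ (f₀ : ℝ) (f₁ : T3 → ℝ),
    MemLp f₁ 2 μc ∧
    ¬ (f₀ = 0 ∧ f₁ =ᵐ[μc] 0) ∧
    u p * f₀ + (Real.sqrt 2)⁻¹ * (∫ q in cube, v q * f₁ q) = z * f₀ ∧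
    (∀ᵐ q ∂μc, (Real.sqrt 2)⁻¹ * v q * f₀ + w p q * f₁ q = z * f₁ q)

/-- Complex version: `z ∈ ℂ` is an eigenvalue of `h(p)` on `ℂ ⊕ L²(𝕋³; ℂ)`. -/
def IsEighC (u v : T3 → ℝ) (w : T3 → T3 → ℝ) (p : T3) (z : ℂ) : Prop :=
  ∃ (f₀ : ℂ) (f₁ : T3 → ℂ),
    MemLp f₁ 2 μc ∧
    ¬ (f₀ = 0 ∧ f₁ =ᵐ[μc] 0) ∧
    (u p : ℂ) * f₀ + ((Real.sqrt 2 : ℂ))⁻¹ * (∫ q in cube, (v q : ℂ) * f₁ q) = z * f₀ ∧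
    (∀ᵐ q ∂μc, ((Real.sqrt 2 : ℂ))⁻¹ * (v q : ℂ) * f₀ + (w p q : ℂ) * f₁ q = z * f₁ q)

/-- Complex Fredholm determinant of `h(p)`. -/
def DelC (u v : T3 → ℝ) (w : T3 → T3 → ℝ) (p : T3) (z : ℂ) : ℂ :=
  (u p : ℂ) - z - (1/2 : ℂ) * ∫ q in cube, ((v q : ℂ)) ^ 2 / ((w p q : ℂ) - z)

/-- `(f₀, f₁, f₂)` solves the eigenvalue equations `H f = z f` for the model
operator `H` on `ℂ ⊕ L²(𝕋³) ⊕ L²ₛ((𝕋³)²)` (real form, possibly `f = 0`). -/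
structure IsEigSolH (u₀ : ℝ) (u v : T3 → ℝ) (w : T3 → T3 → ℝ) (z : ℝ)
    (f₀ : ℝ) (f₁ : T3 → ℝ) (f₂ : T3 → T3 → ℝ) : Prop where
  mem1 : MemLp f₁ 2 μc
  mem2 : MemLp (Function.uncurry f₂) 2 μc2
  symm2 : ∀ p q, f₂ p q = f₂ q p
  eq0 : u₀ * f₀ + (∫ q in cube, v q * f₁ q) = z * f₀
  eq1 : ∀ᵐ p ∂μc, v p * f₀ + u p * f₁ p + (∫ q in cube, v q * f₂ p q) = z * f₁ p
  eq2 : ∀ᵐ x ∂μc2,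
    (1/2) * (v x.2 * f₁ x.1 + v x.1 * f₁ x.2) + w x.1 x.2 * f₂ x.1 x.2 = z * f₂ x.1 x.2

/-- `z` is an eigenvalue of the model operator `H`. -/
def IsEigH (u₀ : ℝ) (u v : T3 → ℝ) (w : T3 → T3 → ℝ) (z : ℝ) : Prop :=
  ∃ (f₀ : ℝ) (f₁ : T3 → ℝ) (f₂ : T3 → T3 → ℝ),
    IsEigSolH u₀ u v w z f₀ f₁ f₂ ∧
    ¬ (f₀ = 0 ∧ f₁ =ᵐ[μc] 0 ∧ Function.uncurry f₂ =ᵐ[μc2] 0)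

/-- A family of vectors of `ℂ ⊕ L² ⊕ L²ₛ` (in function form) is linearly independent
modulo almost-everywhere equality. -/
def AEIndep {n : ℕ} (F : Fin n → ℝ × (T3 → ℝ) × (T3 → T3 → ℝ)) : Prop :=
  ∀ c : Fin n → ℝ,
    (∑ i, c i * (F i).1 = 0) →
    ((fun q => ∑ i, c i * (F i).2.1 q) =ᵐ[μc] 0) →
    ((fun x : T3 × T3 => ∑ i, c i * (F i).2.2 x.1 x.2) =ᵐ[μc2] 0) →
    c = 0

/-- The multiplicity of `z` as an eigenvalue of `H`: the largest number of linearly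
independent (mod a.e. equality) solutions of `H f = z f`. -/
def multH (u₀ : ℝ) (u v : T3 → ℝ) (w : T3 → T3 → ℝ) (z : ℝ) : ℕ :=
  sSup {n : ℕ | ∃ F : Fin n → ℝ × (T3 → ℝ) × (T3 → T3 → ℝ),
    (∀ i, IsEigSolH u₀ u v w z (F i).1 (F i).2.1 (F i).2.2) ∧ AEIndep F}

/-- `N(z)`: the number of eigenvalues of `H` below `z`, counted with multiplicity. -/
def Ncount (u₀ : ℝ) (u v : T3 → ℝ) (w : T3 → T3 → ℝ) (z : ℝ) : ℝ≥0∞ :=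
  ∑' x : {x : ℝ // x < z ∧ IsEigH u₀ u v w x}, (multH u₀ u v w x : ℝ≥0∞)

/-- The operator `h(0)` has an `m`-energy resonance. -/
def HasResonance (u v : T3 → ℝ) (w : T3 → T3 → ℝ) : Prop :=
  u 0 ≠ mMin w ∧
  ∃ ψ : T3 → ℝ, Continuous ψ ∧ ψ 0 ≠ 0 ∧
    ∀ q, ψ q = v q / (2 * (u 0 - mMin w)) * ∫ t in cube, v t * ψ t / (w 0 t - mMin w)

/-!
For `z < m` the integrand `v² / (w(p,·) - z)` is dominated by `v² / (w(p,·) - m)`, so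
`Δ(p,z) > Δ(p,m) ≥ 0` as soon as `Λ(p,m)` is a genuine integral, bounded in `p` (otherwise the
integral and the `sInf` of an unbounded range take junk values). This is where Assumption 1
enters: the nondegenerate minimum, its uniqueness and periodicity give `w(p,q) - m ≥ c|q|²` on
the cube uniformly in `p`, while `v` is bounded and `|q|⁻²` is integrable in dimension three.
Finally, an eigenvector `(f₀, f₁)` at `z < m` has `f₁ = -v f₀ / (√2 (w(p,·) - z))`, and
substituting this into the first eigenvalue equation gives `f₀ Δ(p,z) = 0`.
-/

open Function

section QuadraticLowerBound

variable {E : Type*} [NormedAddCommGroup E] [NormedSpace ℝ E]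

theorem ContinuousMultilinearMap.exists_pos_mul_norm_sq_le [FiniteDimensional ℝ E]
    (Q : ContinuousMultilinearMap ℝ (fun _ : Fin 2 => E) ℝ) (hQ : ∀ x ≠ 0, 0 < Q fun _ => x) :
    ∃ l > 0, ∀ x, l * ‖x‖ ^ 2 ≤ Q fun _ => x := by
  obtain ⟨l, hl, hsphere⟩ := (isCompact_sphere (0 : E) 1).exists_forall_le'
    (Q.cont.comp (continuous_pi fun _ => continuous_id)).continuousOn
    (a := 0) fun y hy => hQ y (ne_zero_of_mem_unit_sphere ⟨y, hy⟩)
  refine ⟨l, hl, fun x => ?_⟩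
  rcases eq_or_ne x 0 with rfl | hx
  · rw [show (fun _ : Fin 2 => (0 : E)) = 0 from rfl, Q.map_zero]
    simp
  have hnx : 0 < ‖x‖ := norm_pos_iff.2 hx
  have hscale : (Q fun _ => x) = ‖x‖ ^ 2 * Q fun _ => ‖x‖⁻¹ • x := by
    have := Q.map_smul_univ (fun _ => ‖x‖⁻¹) fun _ => x
    simp only [Finset.prod_const, Finset.card_univ, Fintype.card_fin, smul_eq_mul] at this
    rw [this, inv_pow, mul_inv_cancel_left₀ (by positivity)]
  rw [hscale, mul_comm l]
  have hunit : ‖x‖⁻¹ • x ∈ Metric.sphere (0 : E) 1 := by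
    rw [mem_sphere_zero_iff_norm, norm_smul, norm_inv, norm_norm, inv_mul_cancel₀ hnx.ne']
  exact mul_le_mul_of_nonneg_left (hsphere _ hunit) (sq_nonneg _)

theorem add_half_mul_le_of_hasDerivAt {g g' g'' : ℝ → ℝ} {α : ℝ}
    (hg : ∀ t, HasDerivAt g (g' t) t) (hg' : ∀ t, HasDerivAt g' (g'' t) t)
    (h0 : g' 0 = 0) (hα : ∀ t ∈ Icc (0 : ℝ) 1, α ≤ g'' t) : g 0 + α / 2 ≤ g 1 := by
  have hderiv_mono : MonotoneOn (fun t => g' t - α * t) (Icc 0 1) := by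
    refine monotoneOn_of_hasDerivWithinAt_nonneg (convex_Icc 0 1)
      (fun t _ => ((hg' t).sub ((hasDerivAt_id t).const_mul α)).continuousAt.continuousWithinAt)
      (fun t _ => ((hg' t).sub ((hasDerivAt_id t).const_mul α)).hasDerivWithinAt) fun t ht => ?_
    have := hα t (interior_subset ht)
    simp only [mul_one]
    linarith
  have hmono : MonotoneOn (fun t => g t - α / 2 * t ^ 2) (Icc 0 1) := by
    have hd : ∀ t, HasDerivAt (fun t => g t - α / 2 * t ^ 2) (g' t - α * t) t := fun t => by
      refine ((hg t).sub ((hasDerivAt_pow 2 t).const_mul (α / 2))).congr_deriv ?_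
      push_cast
      ring
    refine monotoneOn_of_hasDerivWithinAt_nonneg (convex_Icc 0 1)
      (fun t _ => (hd t).continuousAt.continuousWithinAt)
      (fun t _ => (hd t).hasDerivWithinAt) fun t ht => ?_
    have ht' := interior_subset ht
    have := hderiv_mono (left_mem_Icc.2 zero_le_one) ht' ht'.1
    simp only [h0, mul_zero, sub_zero] at this
    exact this
  have := hmono (left_mem_Icc.2 zero_le_one) (right_mem_Icc.2 zero_le_one) zero_le_one
  norm_num at this
  linarith

theorem IsLocalMin.exists_add_mul_norm_sq_le [FiniteDimensional ℝ E] {f : E → ℝ} {a : E}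
    (hf : ContDiff ℝ 2 f) (hmin : IsLocalMin f a)
    (hpos : ∀ x ≠ 0, 0 < iteratedFDeriv ℝ 2 f a fun _ => x) :
    ∃ c > 0, ∀ᶠ x in 𝓝 a, f a + c * ‖x - a‖ ^ 2 ≤ f x := by
  obtain ⟨l, hl, hQ⟩ := (iteratedFDeriv ℝ 2 f a).exists_pos_mul_norm_sq_le hpos
  have hnear : ∀ᶠ y in 𝓝 a, ∀ x, l / 2 * ‖x‖ ^ 2 ≤ iteratedFDeriv ℝ 2 f y fun _ => x := by
    filter_upwards [(hf.continuous_iteratedFDeriv le_rfl).continuousAt.eventually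
      (Metric.ball_mem_nhds _ (half_pos hl))] with y hy x
    have hdiff := ((iteratedFDeriv ℝ 2 f y - iteratedFDeriv ℝ 2 f a).le_opNorm fun _ => x)
    simp only [sub_apply, Finset.prod_const, Finset.card_univ,
      Fintype.card_fin, Real.norm_eq_abs] at hdiff
    have hy' : ‖iteratedFDeriv ℝ 2 f y - iteratedFDeriv ℝ 2 f a‖ ≤ l / 2 :=
      (mem_ball_iff_norm.1 hy).le
    have := (abs_le.1 hdiff).1
    nlinarith [hQ x, mul_le_mul_of_nonneg_right hy' (sq_nonneg ‖x‖)]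
  obtain ⟨r, hr, hball⟩ := Metric.eventually_nhds_iff_ball.1 hnear
  refine ⟨l / 4, by positivity, Metric.eventually_nhds_iff_ball.2 ⟨r, hr, fun x hx => ?_⟩⟩
  set d := x - a
  have hline : ∀ t : ℝ, HasDerivAt (fun s : ℝ => a + s • d) d t := fun t => by
    simpa using ((hasDerivAt_id t).smul_const d).const_add a
  have hf' : ContDiff ℝ 1 (fderiv ℝ f) := hf.fderiv_right le_rfl
  have key := add_half_mul_le_of_hasDerivAt (α := l / 2 * ‖d‖ ^ 2)
    (g := fun t => f (a + t • d)) (g' := fun t => fderiv ℝ f (a + t • d) d)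
    (g'' := fun t => iteratedFDeriv ℝ 2 f (a + t • d) fun _ => d)
    (fun t => ((hf.differentiable two_ne_zero) _).hasFDerivAt.comp_hasDerivAt t (hline t))
    (fun t => by
      have := ((hf'.differentiable one_ne_zero _).hasFDerivAt.comp_hasDerivAt t
        (hline t)).clm_apply (hasDerivAt_const t d)
      simpa [iteratedFDeriv_two_apply] using this)
    (by simp [hmin.fderiv_eq_zero])
    (fun t ht => hball _ ((convex_ball a r).add_smul_sub_mem (Metric.mem_ball_self hr) hx ht) d)
  simp only [zero_smul, add_zero, one_smul, d, add_sub_cancel] at key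
  linarith

end QuadraticLowerBound

theorem IsCompact.exists_mul_norm_sq_le {E : Type*} [NormedAddCommGroup E] {K : Set E}
    (hK : IsCompact K) {g : E → ℝ} (hg : ContinuousOn g K) (hpos : ∀ x ∈ K, x ≠ 0 → 0 < g x)
    {c₀ : ℝ} (hc₀ : 0 < c₀) (hnear : ∀ᶠ x in 𝓝 0, c₀ * ‖x‖ ^ 2 ≤ g x) :
    ∃ c > 0, ∀ x ∈ K, c * ‖x‖ ^ 2 ≤ g x := by
  obtain ⟨r, hr, hball⟩ := Metric.eventually_nhds_iff_ball.1 hnear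
  have hfar : ∀ x ∈ K ∩ {x | r ≤ ‖x‖}, 0 < ‖x‖ := fun x hx => hr.trans_le hx.2
  have hK' : IsCompact (K ∩ {x | r ≤ ‖x‖}) :=
    hK.inter_right (isClosed_le continuous_const continuous_norm)
  obtain ⟨b, hb, hbK⟩ := hK'.exists_forall_le' (a := 0)
    ((hg.mono inter_subset_left).div (continuous_norm.pow 2).continuousOn
      fun x hx => (pow_pos (hfar x hx) 2).ne')
    fun x hx => div_pos (hpos x hx.1 (norm_pos_iff.1 (hfar x hx))) (pow_pos (hfar x hx) 2)
  refine ⟨min c₀ b, lt_min hc₀ hb, fun x hx => ?_⟩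
  rcases lt_or_ge ‖x‖ r with hxr | hxr
  · calc min c₀ b * ‖x‖ ^ 2 ≤ c₀ * ‖x‖ ^ 2 := by gcongr; exact min_le_left _ _
      _ ≤ g x := hball x (by simpa using hxr)
  · have : b ≤ g x / ‖x‖ ^ 2 := hbK x ⟨hx, hxr⟩
    rw [le_div_iff₀ (pow_pos (hfar x ⟨hx, hxr⟩) 2)] at this
    calc min c₀ b * ‖x‖ ^ 2 ≤ b * ‖x‖ ^ 2 := by gcongr; exact min_le_right _ _
      _ ≤ g x := this

theorem locallyIntegrable_inv_norm_sq {E : Type*} [NormedAddCommGroup E] [NormedSpace ℝ E]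
    [FiniteDimensional ℝ E] [MeasurableSpace E] [BorelSpace E] {μ : Measure E}
    [μ.IsAddHaarMeasure] (hE : 2 < Module.finrank ℝ E) :
    LocallyIntegrable (fun x : E => (‖x‖ ^ 2)⁻¹) μ :=
  locallyIntegrable_of_norm_le_rpow (C := 1) (α := 2) (by omega) (by exact_mod_cast hE)
    (ae_of_all _ fun x => by
      rw [one_mul, Real.rpow_neg (norm_nonneg x), Real.rpow_two, norm_inv, norm_pow, norm_norm])
    (by fun_prop)

def closedCube : Set T3 := {p | ∀ i, p i ∈ Icc (-π) π}

theorem cube_subset_closedCube : cube ⊆ closedCube := fun _ hp i => Ioc_subset_Icc_self (hp i)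

theorem isCompact_closedCube : IsCompact closedCube := by
  have : closedCube = (EuclideanSpace.equiv (Fin 3) ℝ) ⁻¹' univ.pi fun _ => Icc (-π) π := by
    ext p
    simp only [closedCube, mem_ofPred_eq, mem_preimage, mem_univ_pi]
    rfl
  rw [this]
  exact (EuclideanSpace.equiv (Fin 3) ℝ).toHomeomorph.isCompact_preimage.2
    (isCompact_univ_pi fun _ => isCompact_Icc)

theorem measurableSet_cube : MeasurableSet cube := by
  have : cube = (EuclideanSpace.equiv (Fin 3) ℝ) ⁻¹' univ.pi fun _ => Ioc (-π) π := by
    ext p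
    simp only [cube, mem_ofPred_eq, mem_preimage, mem_univ_pi]
    rfl
  rw [this]
  exact (MeasurableSet.univ_pi fun _ => measurableSet_Ioc).preimage (by fun_prop)

theorem latticeShift_apply (s : Fin 3 → ℤ) (i : Fin 3) : latticeShift s i = 2 * π * s i := rfl

theorem latticeShift_zero : latticeShift 0 = 0 := by
  ext i
  simp [latticeShift_apply]

theorem exists_add_latticeShift_mem_cube (p : T3) : ∃ s, p + latticeShift s ∈ cube := by
  refine ⟨fun i => ⌊(π - p i) / (2 * π)⌋, fun i => ?_⟩
  have h2π : 0 < 2 * π := by positivity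
  have hlo := Int.floor_le ((π - p i) / (2 * π))
  have hhi := Int.lt_floor_add_one ((π - p i) / (2 * π))
  rw [le_div_iff₀ h2π] at hlo
  rw [div_lt_iff₀ h2π] at hhi
  simp only [PiLp.add_apply, latticeShift_apply, mem_Ioc]
  constructor <;> nlinarith

theorem eq_zero_of_add_latticeShift_eq_zero {p : T3} (hp : p ∈ closedCube) {s : Fin 3 → ℤ}
    (h : p + latticeShift s = 0) : p = 0 := by
  ext i
  have hi : p i + 2 * π * s i = 0 := by simpa [latticeShift_apply] using congr($h i)
  obtain ⟨hlo, hhi⟩ := hp i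
  have hs : s i = 0 := by
    have h1 : (s i : ℝ) < 1 := by nlinarith [Real.pi_pos]
    have h2 : (-1 : ℝ) < s i := by nlinarith [Real.pi_pos]
    have : s i < 1 := by exact_mod_cast h1
    have : -1 < s i := by exact_mod_cast h2
    omega
  simp only [hs, Int.cast_zero, mul_zero, add_zero] at hi
  simpa using hi

section Dispersion

variable {w : T3 → T3 → ℝ}

theorem eq_zero_of_mem_closedCube_of_eq_min
    (hper : ∀ (s t : Fin 3 → ℤ) (p q : T3), w (p + latticeShift s) (q + latticeShift t) = w p q)
    (huniq : ∀ p ∈ cube, ∀ q ∈ cube, w p q = w 0 0 → p = 0 ∧ q = 0)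
    {p q : T3} (hp : p ∈ closedCube) (hq : q ∈ closedCube) (h : w p q = w 0 0) :
    p = 0 ∧ q = 0 := by
  obtain ⟨s, hs⟩ := exists_add_latticeShift_mem_cube p
  obtain ⟨t, ht⟩ := exists_add_latticeShift_mem_cube q
  obtain ⟨hs0, ht0⟩ := huniq _ hs _ ht ((hper s t p q).trans h)
  exact ⟨eq_zero_of_add_latticeShift_eq_zero hp hs0, eq_zero_of_add_latticeShift_eq_zero hq ht0⟩

theorem exists_mul_norm_sq_le_sub_min
    (hper : ∀ (s t : Fin 3 → ℤ) (p q : T3), w (p + latticeShift s) (q + latticeShift t) = w p q)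
    (hw : ContDiff ℝ 2 (uncurry w))
    (hmin : ∀ p q, w 0 0 ≤ w p q)
    (hnd : ∀ x : T3 × T3, x ≠ 0 →
      0 < iteratedFDeriv ℝ 2 (uncurry w) ((0 : T3), (0 : T3)) fun _ => x)
    (huniq : ∀ p ∈ cube, ∀ q ∈ cube, w p q = w 0 0 → p = 0 ∧ q = 0) :
    ∃ c > 0, ∀ p, ∀ q ∈ cube, c * ‖q‖ ^ 2 ≤ w p q - w 0 0 := by
  obtain ⟨c₀, hc₀, hnear⟩ := IsLocalMin.exists_add_mul_norm_sq_le (a := 0) hw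
    (Eventually.of_forall fun x => hmin x.1 x.2) hnd
  obtain ⟨c, hc, hK⟩ := (isCompact_closedCube.prod isCompact_closedCube).exists_mul_norm_sq_le
    (g := fun x => uncurry w x - w 0 0) (hw.continuous.sub continuous_const).continuousOn
    (fun x hx hx0 => sub_pos.2 <| (hmin x.1 x.2).lt_of_ne fun h =>
      hx0 (Prod.ext_iff.2 (eq_zero_of_mem_closedCube_of_eq_min hper huniq hx.1 hx.2 h.symm)))
    hc₀ (hnear.mono fun x hx => by
      rw [sub_zero] at hx
      exact le_sub_iff_add_le'.2 hx)
  refine ⟨c, hc, fun p q hq => ?_⟩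
  obtain ⟨s, hs⟩ := exists_add_latticeShift_mem_cube p
  have hbound := hK (p + latticeShift s, q) ⟨cube_subset_closedCube hs, cube_subset_closedCube hq⟩
  calc c * ‖q‖ ^ 2 ≤ c * ‖(p + latticeShift s, q)‖ ^ 2 := by
        gcongr; exact norm_snd_le (p + latticeShift s, q)
    _ ≤ w (p + latticeShift s) q - w 0 0 := hbound
    _ = w p q - w 0 0 := by simpa [latticeShift_zero] using congr($(hper s 0 p q) - w 0 0)

end Dispersion

theorem ae_restrict_cube_mem_ne_zero : ∀ᵐ q ∂volume.restrict cube, q ∈ cube ∧ q ≠ 0 :=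
  (ae_restrict_mem measurableSet_cube).and (ae_restrict_of_ae (Measure.ae_ne volume 0))

section Lam

variable {v : T3 → ℝ} {w : T3 → T3 → ℝ} {c : ℝ}

theorem exists_lam_min_le (hv : Continuous v) (hw : Continuous (uncurry w)) (hc : 0 < c)
    (hlow : ∀ p, ∀ q ∈ cube, c * ‖q‖ ^ 2 ≤ w p q - mMin w) :
    ∃ K, ∀ p, IntegrableOn (fun q => v q ^ 2 / (w p q - mMin w)) cube ∧
      Lam v w p (mMin w) ≤ K := by
  obtain ⟨B, hB⟩ := isCompact_closedCube.exists_bound_of_continuousOn hv.continuousOn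
  set bound : T3 → ℝ := fun q => B ^ 2 / c * (‖q‖ ^ 2)⁻¹
  have hbound_int : IntegrableOn bound cube :=
    (((locallyIntegrable_inv_norm_sq (by simp)).integrableOn_isCompact
      isCompact_closedCube).mono_set cube_subset_closedCube).const_mul _
  refine ⟨∫ q in cube, bound q, fun p => ?_⟩
  have hnonneg : ∀ᵐ q ∂volume.restrict cube, 0 ≤ v q ^ 2 / (w p q - mMin w) :=
    ae_restrict_cube_mem_ne_zero.mono fun q hq =>
      div_nonneg (sq_nonneg _) ((mul_nonneg hc.le (sq_nonneg _)).trans (hlow p q hq.1))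
  have hle : ∀ᵐ q ∂volume.restrict cube, v q ^ 2 / (w p q - mMin w) ≤ bound q := by
    filter_upwards [ae_restrict_cube_mem_ne_zero] with q ⟨hq, hq0⟩
    have hq2 : 0 < ‖q‖ ^ 2 := by positivity
    have hv2 : v q ^ 2 ≤ B ^ 2 := by
      simpa [sq_abs] using pow_le_pow_left₀ (norm_nonneg _) (hB q (cube_subset_closedCube hq)) 2
    calc v q ^ 2 / (w p q - mMin w) ≤ B ^ 2 / (c * ‖q‖ ^ 2) :=
          div_le_div₀ (by positivity) hv2 (by positivity) (hlow p q hq)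
      _ = bound q := by simp only [bound]; field_simp
  have hmeas : Measurable fun q => v q ^ 2 / (w p q - mMin w) :=
    (hv.pow 2).measurable.div
      ((hw.comp (continuous_const.prodMk continuous_id)).sub continuous_const).measurable
  have hint : IntegrableOn (fun q => v q ^ 2 / (w p q - mMin w)) cube := by
    refine hbound_int.mono' hmeas.aestronglyMeasurable ?_
    filter_upwards [hnonneg, hle] with q h0 h
    rwa [Real.norm_eq_abs, abs_of_nonneg h0]
  exact ⟨hint, integral_mono_ae hint hbound_int hle⟩

theorem lam_le_lam_min {p : T3} {z : ℝ} (hz : z ≤ mMin w)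
    (hint : IntegrableOn (fun q => v q ^ 2 / (w p q - mMin w)) cube)
    (hgt : ∀ᵐ q ∂volume.restrict cube, mMin w < w p q) :
    Lam v w p z ≤ Lam v w p (mMin w) :=
  integral_mono_of_nonneg (hgt.mono fun q hq => div_nonneg (sq_nonneg _) (by linarith)) hint
    (hgt.mono fun q hq => div_le_div_of_nonneg_left (sq_nonneg _) (by linarith) (by linarith))

theorem bddBelow_range_del_min {u : T3 → ℝ} {K : ℝ} (hu : ∃ C, ∀ p, |u p| ≤ C)
    (hK : ∀ p, Lam v w p (mMin w) ≤ K) : BddBelow (range fun p => Del u v w p (mMin w)) := by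
  obtain ⟨C, hC⟩ := hu
  refine ⟨-C - mMin w - K / 2, ?_⟩
  rintro _ ⟨p, rfl⟩
  have := (abs_le.1 (hC p)).1
  have := hK p
  unfold Del
  linarith

end Lam

theorem not_isEigh_of_del_ne_zero {u v : T3 → ℝ} {w : T3 → T3 → ℝ} {p : T3} {z : ℝ}
    (hz : ∀ q, z < w p q) (hΔ : Del u v w p z ≠ 0) : ¬ IsEigh u v w p z := by
  rintro ⟨f₀, f₁, -, hne, heq₀, heq₁⟩
  have hf₁ : ∀ᵐ q ∂μc, f₁ q = -((√2)⁻¹ * f₀) * (v q / (w p q - z)) := heq₁.mono fun q hq => by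
    rw [mul_div_assoc', eq_div_iff (sub_pos.2 (hz q)).ne']
    linear_combination hq
  have hint : ∫ q in cube, v q * f₁ q = -((√2)⁻¹ * f₀) * Lam v w p z := by
    rw [Lam, ← integral_const_mul]
    exact integral_congr_ae (hf₁.mono fun q hq => by simp only [hq]; ring)
  have hf₀ : f₀ = 0 := by
    have hsqrt : (√2)⁻¹ * (√2)⁻¹ = (1 / 2 : ℝ) := by
      rw [← mul_inv, Real.mul_self_sqrt zero_le_two, one_div]
    refine (mul_eq_zero.1 (?_ : f₀ * Del u v w p z = 0)).resolve_right hΔ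
    rw [hint] at heq₀
    unfold Del
    linear_combination heq₀ + f₀ * Lam v w p z * hsqrt
  exact hne ⟨hf₀, hf₁.mono fun q hq => by simp [hq, hf₀]⟩

/-- if `min_p Δ(p,m) ≥ 0`, then no `h(p)` has an eigenvalue below `m`;
in fact `Δ(p,z) > 0` for all `p` and all `z < m`. -/
theorem no_eigenvalue_below_m_of_min_nonneg
    (u v : T3 → ℝ) (w : T3 → T3 → ℝ) (θ : ℝ≥0)
    (hb : BasicSetup u v w)
    (h1i : Assumption1i w θ)
    (hv : HolderB θ v)
    (hmin : 0 ≤ sInf (Set.range fun p => Del u v w p (mMin w))) :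
    (∀ p : T3, ∀ z < mMin w, 0 < Del u v w p z) ∧
    (∀ p : T3, ∀ z < mMin w, ¬ IsEigh u v w p z) := by
  have hvc : Continuous v := by
    obtain ⟨C, hC⟩ := hv
    exact hC.continuous (by have := h1i.theta_lb; exact_mod_cast (by linarith : (0 : ℝ) < θ))
  have hw : ContDiff ℝ 2 (uncurry w) := h1i.contDiff.of_le (by norm_num)
  obtain ⟨c, hc, hlow⟩ :=
    exists_mul_norm_sq_le_sub_min hb.w_per hw h1i.min_le h1i.nondeg h1i.uniqueMin
  have hgt : ∀ p, ∀ᵐ q ∂volume.restrict cube, mMin w < w p q := fun p =>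
    ae_restrict_cube_mem_ne_zero.mono fun q hq =>
      sub_pos.1 ((mul_pos hc (pow_pos (norm_pos_iff.2 hq.2) 2)).trans_le (hlow p q hq.1))
  obtain ⟨K, hK⟩ := exists_lam_min_le hvc hw.continuous hc hlow
  have hbdd := bddBelow_range_del_min hb.u_bdd fun p => (hK p).2
  have hpos : ∀ p, ∀ z < mMin w, 0 < Del u v w p z := by
    intro p z hz
    have hΔm : 0 ≤ Del u v w p (mMin w) := hmin.trans (csInf_le hbdd ⟨p, rfl⟩)
    have hLam := lam_le_lam_min hz.le (hK p).1 (hgt p)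
    unfold Del at hΔm ⊢
    linarith
  exact ⟨hpos, fun p z hz =>
    not_isEigh_of_del_ne_zero (fun q => hz.trans_le (h1i.min_le p q)) (hpos p z hz).ne'⟩
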